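/- Let (X, f_{1,∞}) be an m-periodic commutative non-autonomous system. Then (X, f_{1,∞}) is weakly mixing if and only if the k-th iterate system f_{1,∞}^{[k]} is weakly mixing for every k ≥ 1. -/

import Mathlib

open Set Filter MeasureTheory TopologicalSpace

/-- `iterN f n = f_{n-1} ∘ ⋯ ∘ f_0`, the `n`-th iterate of the non-autonomous system. -/
def iterN {X : Type*} (f : ℕ → X → X) : ℕ → X → X
  | 0 => id
  | n + 1 => f n ∘ iterN f n

/-- Topological transitivity of a non-autonomous system. -/
def NATransitive {X : Type*} [TopologicalSpace X] (f : ℕ → X → X) : Prop :=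
  ∀ U V : Set X, IsOpen U → IsOpen V → U.Nonempty → V.Nonempty →
    ∃ n : ℕ, 0 < n ∧ (iterN f n '' U ∩ V).Nonempty

/-- Weak mixing (order 2). -/
def NAWeaklyMixing {X : Type*} [TopologicalSpace X] (f : ℕ → X → X) : Prop :=
  ∀ U₁ U₂ V₁ V₂ : Set X, IsOpen U₁ → IsOpen U₂ → IsOpen V₁ → IsOpen V₂ →
    U₁.Nonempty → U₂.Nonempty → V₁.Nonempty → V₂.Nonempty →
    ∃ n : ℕ, 0 < n ∧ (iterN f n '' U₁ ∩ V₁).Nonempty ∧ (iterN f n '' U₂ ∩ V₂).Nonempty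

/-- Weak mixing of order `m`. -/
def NAWeaklyMixingOrder {X : Type*} [TopologicalSpace X] (f : ℕ → X → X) (m : ℕ) : Prop :=
  ∀ U V : Fin m → Set X, (∀ i, IsOpen (U i)) → (∀ i, IsOpen (V i)) →
    (∀ i, (U i).Nonempty) → (∀ i, (V i).Nonempty) →
    ∃ n : ℕ, 0 < n ∧ ∀ i, (iterN f n '' U i ∩ V i).Nonempty

/-- Banks's condition. -/
def NABanks {X : Type*} [TopologicalSpace X] (f : ℕ → X → X) : Prop :=
  ∀ U V W : Set X, IsOpen U → IsOpen V → IsOpen W →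
    U.Nonempty → V.Nonempty → W.Nonempty →
    ∃ n : ℕ, 0 < n ∧ (iterN f n '' U ∩ V).Nonempty ∧ (iterN f n '' U ∩ W).Nonempty

/-- Topological mixing. -/
def NAMixing {X : Type*} [TopologicalSpace X] (f : ℕ → X → X) : Prop :=
  ∀ U V : Set X, IsOpen U → IsOpen V → U.Nonempty → V.Nonempty →
    ∃ N : ℕ, ∀ n ≥ N, (iterN f n '' U ∩ V).Nonempty

/-- `blockC f s k = f_{s+k-1} ∘ ⋯ ∘ f_s`. -/
def blockC {X : Type*} (f : ℕ → X → X) (s k : ℕ) : X → X :=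
  iterN (fun i => f (s + i)) k

/-- The `k`-th iterate system `f_{1,∞}^{[k]}`. -/
def kthSys {X : Type*} (f : ℕ → X → X) (k : ℕ) : ℕ → X → X :=
  fun n => blockC f (n * k) k

/-- The induced non-autonomous system on Borel probability measures (pushforwards). -/
noncomputable def inducedM {X : Type*} [MeasurableSpace X] [TopologicalSpace X]
    [BorelSpace X] (f : ℕ → X → X) (hf : ∀ n, Continuous (f n)) :
    ℕ → ProbabilityMeasure X → ProbabilityMeasure X :=
  fun n μ => μ.map ((hf n).measurable.aemeasurable)

/-- The induced non-autonomous system on the hyperspace of non-empty compact subsets. -/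
def inducedK {X : Type*} [TopologicalSpace X] (f : ℕ → X → X) (hf : ∀ n, Continuous (f n)) :
    ℕ → NonemptyCompacts X → NonemptyCompacts X :=
  fun n K => ⟨⟨f n '' (K : Set X), K.isCompact.image (hf n)⟩, K.nonempty.image _⟩

/-- The set `N(U, δ)` of sensitivity times. -/
def NSet {X : Type*} [PseudoMetricSpace X] (f : ℕ → X → X) (U : Set X) (δ : ℝ) : Set ℕ :=
  {n | 0 < n ∧ ∃ x ∈ U, ∃ y ∈ U, δ < dist (iterN f n x) (iterN f n y)}

/-- Sensitive dependence on initial conditions. -/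
def NASensitive {X : Type*} [PseudoMetricSpace X] (f : ℕ → X → X) : Prop :=
  ∃ δ : ℝ, 0 < δ ∧ ∀ x : X, ∀ U : Set X, IsOpen U → x ∈ U →
    ∃ y ∈ U, ∃ n : ℕ, 0 < n ∧ δ < dist (iterN f n x) (iterN f n y)

/-- A thick subset of ℕ. -/
def ThickSet (S : Set ℕ) : Prop := ∀ p : ℕ, ∃ n : ℕ, ∀ j ≤ p, n + j ∈ S

/-- A syndetic subset of ℕ. -/
def SyndeticSet (S : Set ℕ) : Prop := ∃ a : ℕ, ∀ i : ℕ, ∃ j, i ≤ j ∧ j ≤ i + a ∧ j ∈ S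

/-- Upper density of a subset of ℕ. -/
noncomputable def upperDens (S : Set ℕ) : ℝ :=
  Filter.limsup (fun n : ℕ => (Nat.card ↥(S ∩ Set.Iio n) : ℝ) / n) Filter.atTop

/-- Periodic point of a non-autonomous system. -/
def NAPeriodicPt {X : Type*} (f : ℕ → X → X) (x : X) : Prop :=
  ∃ n : ℕ, 0 < n ∧ ∀ k : ℕ, 0 < k → iterN f (n * k) x = x

/-!
Weak mixing of a commuting system gives Furstenberg's intersection property: finitely many
pairs of nonempty open sets can be replaced by a single such pair whose hitting times are
common hitting times of all of them. For `K = m * k`, apply it to the pairs `(U, W s)`, `s < K`,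
where `W s` is the preimage of `V` under the `K - s` maps that carry a time with residue `s`
to the next multiple of `K`; by periodicity these maps depend only on the residue. Any
hitting time `n` of the combined pair then gives a hit of `(U, V)` at the multiple of `K`
following `n`. The sets `W s` are nonempty because every `f j` is onto: its range is closed,
contains the image of every iterate of length `> j` (commutativity), and weak mixing
produces arbitrarily late hits into the complement of the range.
-/

open Function Topology

section Dynamics

variable {X : Type*} {f : ℕ → X → X}

/-- The set `N(U, V)` of the paper (including the time `0`). -/
def hitTimes (f : ℕ → X → X) (U V : Set X) : Set ℕ :=
  {n | (iterN f n '' U ∩ V).Nonempty}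

lemma mem_hitTimes {U V : Set X} {n : ℕ} : n ∈ hitTimes f U V ↔ ∃ x ∈ U, iterN f n x ∈ V := by
  simp [hitTimes, Set.Nonempty]

lemma iterN_add (f : ℕ → X → X) (a b : ℕ) : iterN f (a + b) = blockC f a b ∘ iterN f a := by
  induction b with
  | zero => rfl
  | succ b ih => rw [← add_assoc, iterN, ih]; rfl

lemma iterN_kthSys (f : ℕ → X → X) (k n : ℕ) : iterN (kthSys f k) n = iterN f (n * k) := by
  induction n with
  | zero => rw [zero_mul]; rfl
  | succ n ih => rw [iterN, ih, add_one_mul, iterN_add]; rfl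

lemma blockC_congr_of_modEq {m : ℕ} (hper : Periodic f m) {a b : ℕ} (hab : a ≡ b [MOD m])
    (t : ℕ) : blockC f a t = blockC f b t := by
  have hshift : (fun i => f (a + i)) = fun i => f (b + i) := funext fun i => by
    rw [← hper.map_mod_nat, ← hper.map_mod_nat (b + i), hab.add_right i]
  rw [blockC, blockC, hshift]

lemma commute_iterN {g : X → X} (h : ∀ n, Function.Commute g (f n)) (n : ℕ) :
    Function.Commute g (iterN f n) := by
  induction n with
  | zero => exact Function.Commute.id_right
  | succ n ih => exact (h n).comp_right ih

lemma commute_iterN_iterN (hc : ∀ i j, Function.Commute (f i) (f j)) (a b : ℕ) :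
    Function.Commute (iterN f a) (iterN f b) :=
  commute_iterN (fun j => (commute_iterN (fun i => hc j i) a).symm) b

lemma commute_blockC (hc : ∀ i j, Function.Commute (f i) (f j)) (i s t : ℕ) :
    Function.Commute (f i) (blockC f s t) :=
  commute_iterN (fun j => hc i (s + j)) t

lemma surjective_iterN (h : ∀ n, Surjective (f n)) (n : ℕ) : Surjective (iterN f n) := by
  induction n with
  | zero => exact surjective_id
  | succ n ih => exact (h n).comp ih

section Topology

variable [TopologicalSpace X]

lemma continuous_iterN (hf : ∀ n, Continuous (f n)) (n : ℕ) : Continuous (iterN f n) := by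
  induction n with
  | zero => exact continuous_id
  | succ n ih => exact (hf n).comp ih

lemma continuous_blockC (hf : ∀ n, Continuous (f n)) (s t : ℕ) : Continuous (blockC f s t) :=
  continuous_iterN (fun i => hf (s + i)) t

lemma NAWeaklyMixing.infinite [T1Space X] (hwm : NAWeaklyMixing f) {u v : X} (huv : u ≠ v) :
    Infinite X := by
  by_contra hfin
  have : Finite X := not_infinite_iff_finite.1 hfin
  obtain ⟨n, -, ⟨_, ⟨_, rfl, rfl⟩, hu⟩, ⟨_, ⟨_, rfl, rfl⟩, hv⟩⟩ :=
    hwm {u} {u} {u} {v} (isOpen_discrete _) (isOpen_discrete _) (isOpen_discrete _)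
      (isOpen_discrete _) (singleton_nonempty _) (singleton_nonempty _) (singleton_nonempty _)
      (singleton_nonempty _)
  exact huv (hu.symm.trans hv)

lemma NAWeaklyMixing.exists_lt_mem_hitTimes [T2Space X] [Infinite X]
    (hf : ∀ n, Continuous (f n)) (hwm : NAWeaklyMixing f) {U V : Set X} (hU : IsOpen U)
    (hV : IsOpen V) (hUne : U.Nonempty) (hVne : V.Nonempty) (N : ℕ) :
    ∃ n, N < n ∧ n ∈ hitTimes f U V := by
  obtain ⟨a⟩ := (inferInstance : Nonempty X)
  obtain ⟨b, hb⟩ := ((finite_Iic N).image fun i => iterN f i a).exists_notMem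
  -- an auxiliary pair `(A, B)` that cannot be hit at any time `≤ N`
  have hsep : ∀ᶠ p : X × X in 𝓝 (a, b), ∀ i ∈ Iic N, iterN f i p.1 ≠ p.2 :=
    (eventually_all_finite (finite_Iic N)).2 fun i hi =>
      (isOpen_ne_fun ((continuous_iterN hf i).comp continuous_fst) continuous_snd).mem_nhds
        fun h => hb ⟨i, hi, h⟩
  obtain ⟨A, B, hA, ha, hB, hb', hAB⟩ := mem_nhds_prod_iff'.1 hsep
  obtain ⟨n, -, hUV, hn⟩ := hwm U A V B hU hA hV hB hUne ⟨a, ha⟩ hVne ⟨b, hb'⟩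
  refine ⟨n, not_le.1 fun hnN => ?_, hUV⟩
  obtain ⟨x, hxA, hxB⟩ := mem_hitTimes.1 hn
  exact hAB (mk_mem_prod hxA hxB) n hnN rfl

lemma NAWeaklyMixing.surjective [T2Space X] [CompactSpace X] (hf : ∀ n, Continuous (f n))
    (hc : ∀ i j, Function.Commute (f i) (f j)) (hwm : NAWeaklyMixing f) (j : ℕ) : Surjective (f j) := by
  by_contra hj
  obtain ⟨y, hy⟩ := not_forall.1 hj
  have : Infinite X := hwm.infinite (u := f j y) (v := y) fun h => hy ⟨y, h⟩
  obtain ⟨n, hjn, hn⟩ := hwm.exists_lt_mem_hitTimes hf isOpen_univ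
    (isCompact_range (hf j)).isClosed.isOpen_compl univ_nonempty ⟨y, hy⟩ j
  obtain ⟨x, -, hx⟩ := mem_hitTimes.1 hn
  obtain ⟨t, rfl⟩ := Nat.exists_eq_add_of_le hjn
  refine hx ⟨blockC f (j + 1) t (iterN f j x), ?_⟩
  rw [iterN_add]
  exact commute_blockC hc j (j + 1) t _

lemma NAWeaklyMixing.exists_hitTimes_subset_inter (hf : ∀ n, Continuous (f n))
    (hc : ∀ i j, Function.Commute (f i) (f j)) (hwm : NAWeaklyMixing f) {U₁ V₁ U₂ V₂ : Set X}
    (hU₁ : IsOpen U₁) (hV₁ : IsOpen V₁) (hU₂ : IsOpen U₂) (hV₂ : IsOpen V₂)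
    (hU₁ne : U₁.Nonempty) (hV₁ne : V₁.Nonempty) (hU₂ne : U₂.Nonempty) (hV₂ne : V₂.Nonempty) :
    ∃ U V : Set X, IsOpen U ∧ IsOpen V ∧ U.Nonempty ∧ V.Nonempty ∧
      hitTimes f U V ⊆ hitTimes f U₁ V₁ ∩ hitTimes f U₂ V₂ := by
  obtain ⟨n, -, hU, hV⟩ := hwm U₁ V₁ U₂ V₂ hU₁ hV₁ hU₂ hV₂ hU₁ne hV₁ne hU₂ne hV₂ne
  refine ⟨U₁ ∩ iterN f n ⁻¹' U₂, V₁ ∩ iterN f n ⁻¹' V₂,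
    hU₁.inter (hU₂.preimage (continuous_iterN hf n)),
    hV₁.inter (hV₂.preimage (continuous_iterN hf n)),
    image_inter_nonempty_iff.1 hU, image_inter_nonempty_iff.1 hV, fun j hj => ?_⟩
  obtain ⟨x, ⟨hx₁, hx₂⟩, hy₁, hy₂⟩ := mem_hitTimes.1 hj
  refine ⟨mem_hitTimes.2 ⟨x, hx₁, hy₁⟩, mem_hitTimes.2 ⟨iterN f n x, hx₂, ?_⟩⟩
  rwa [← commute_iterN_iterN hc n j x]

lemma NAWeaklyMixing.exists_hitTimes_subset_biInter (hf : ∀ n, Continuous (f n))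
    (hc : ∀ i j, Function.Commute (f i) (f j)) (hwm : NAWeaklyMixing f) {ι : Type*} {s : Finset ι}
    (hs : s.Nonempty) {U V : ι → Set X} (hU : ∀ i ∈ s, IsOpen (U i))
    (hV : ∀ i ∈ s, IsOpen (V i)) (hUne : ∀ i ∈ s, (U i).Nonempty)
    (hVne : ∀ i ∈ s, (V i).Nonempty) :
    ∃ U₀ V₀ : Set X, IsOpen U₀ ∧ IsOpen V₀ ∧ U₀.Nonempty ∧ V₀.Nonempty ∧
      ∀ i ∈ s, hitTimes f U₀ V₀ ⊆ hitTimes f (U i) (V i) := by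
  induction hs using Finset.Nonempty.cons_induction with
  | singleton i =>
    simp only [Finset.mem_singleton, forall_eq] at hU hV hUne hVne ⊢
    exact ⟨U i, V i, hU, hV, hUne, hVne, subset_rfl⟩
  | cons i s hi hs ih =>
    simp only [Finset.mem_cons, forall_eq_or_imp] at hU hV hUne hVne ⊢
    obtain ⟨U', V', hU', hV', hU'ne, hV'ne, hsub'⟩ := ih hU.2 hV.2 hUne.2 hVne.2
    obtain ⟨U₀, V₀, hU₀, hV₀, hU₀ne, hV₀ne, hsub₀⟩ := hwm.exists_hitTimes_subset_inter hf hc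
      hU.1 hV.1 hU' hV' hUne.1 hVne.1 hU'ne hV'ne
    exact ⟨U₀, V₀, hU₀, hV₀, hU₀ne, hV₀ne, fun n hn => (hsub₀ hn).1,
      fun j hj => fun n hn => hsub' j hj (hsub₀ hn).2⟩

lemma NAWeaklyMixing.exists_pos_mul_mem_hitTimes [T2Space X] [CompactSpace X]
    (hf : ∀ n, Continuous (f n)) (hc : ∀ i j, Function.Commute (f i) (f j)) {m : ℕ}
    (hper : Periodic f m) (hwm : NAWeaklyMixing f) {K : ℕ} (hK : 0 < K) (hmK : m ∣ K)
    {U V : Set X} (hU : IsOpen U) (hV : IsOpen V) (hUne : U.Nonempty) (hVne : V.Nonempty) :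
    ∃ q, 0 < q ∧ q * K ∈ hitTimes f U V := by
  obtain ⟨U₀, V₀, hU₀, hV₀, hU₀ne, hV₀ne, hsub⟩ :=
    hwm.exists_hitTimes_subset_biInter hf hc (Finset.nonempty_range_iff.2 hK.ne')
      (U := fun _ => U) (V := fun s => blockC f s (K - s) ⁻¹' V) (fun _ _ => hU)
      (fun s _ => hV.preimage (continuous_blockC hf s _)) (fun _ _ => hUne)
      (fun s _ => (surjective_iterN (fun i => hwm.surjective hf hc (s + i)) _).nonempty_preimage.2
        hVne)
  obtain ⟨n, -, hn, -⟩ := hwm U₀ U₀ V₀ V₀ hU₀ hU₀ hV₀ hV₀ hU₀ne hU₀ne hV₀ne hV₀ne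
  obtain ⟨x, hxU, hx⟩ := mem_hitTimes.1 (hsub (n % K) (Finset.mem_range.2 (Nat.mod_lt n hK)) hn)
  refine ⟨n / K + 1, Nat.succ_pos _, mem_hitTimes.2 ⟨x, hxU, ?_⟩⟩
  have hnext : (n / K + 1) * K = n + (K - n % K) := by
    have := Nat.div_add_mod n K
    have := Nat.mod_lt n hK
    rw [add_mul, one_mul, mul_comm]
    omega
  rw [hnext, iterN_add, comp_apply,
    blockC_congr_of_modEq hper ((Nat.mod_modEq n K).of_dvd hmK).symm]
  exact hx

end Topology

end Dynamics

/-- an `m`-periodic commutative non-autonomous system is weakly mixing iff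
every `k`-th iterate system (`k ≥ 1`) is weakly mixing. -/
theorem periodic_commutative_weaklyMixing_iff_kth {X : Type*} [MetricSpace X] [CompactSpace X]
    (f : ℕ → X → X) (hf : ∀ n, Continuous (f n)) (m : ℕ) (hm : 0 < m)
    (hper : ∀ n, f (n + m) = f n) (hc : ∀ i j, f i ∘ f j = f j ∘ f i) :
    NAWeaklyMixing f ↔ ∀ k : ℕ, 1 ≤ k → NAWeaklyMixing (kthSys f k) := by
  have hcomm : ∀ i j, Function.Commute (f i) (f j) := fun i j => congrFun (hc i j)
  refine ⟨fun hwm k hk => ?_, fun h => ?_⟩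
  · intro U₁ U₂ V₁ V₂ hU₁ hU₂ hV₁ hV₂ hU₁ne hU₂ne hV₁ne hV₂ne
    obtain ⟨U, V, hU, hV, hUne, hVne, hsub⟩ := hwm.exists_hitTimes_subset_inter hf hcomm
      hU₁ hV₁ hU₂ hV₂ hU₁ne hV₁ne hU₂ne hV₂ne
    obtain ⟨q, hq, hqK⟩ := hwm.exists_pos_mul_mem_hitTimes hf hcomm hper (mul_pos hm hk)
      (dvd_mul_right m k) hU hV hUne hVne
    refine ⟨q * m, mul_pos hq hm, ?_⟩
    rw [iterN_kthSys, mul_assoc]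
    exact hsub hqK
  · simpa only [NAWeaklyMixing, iterN_kthSys, mul_one] using h 1 le_rfl
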